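/- For every natural number I ≥ 1, define α*_1(I) = 1/I − (1/I)·((I+1)/(44I+22))·(9I² + 7I + 20 − √(81I⁴ + 126I³ + 409I² − 512I + 4)) and α*_2(I) = (1/(44I+22))·(9I² + 7I + 20 − √(81I⁴ + 126I³ + 409I² − 512I + 4)). Then 81I⁴ + 126I³ + 409I² − 512I + 4 > 0, and (α*_1(I), α*_2(I)) satisfies the symmetric-equilibrium first-order system for the two-round game with w_1 = 1, w_2 = 11/9: setting β_1 = α*_1(I), β_2 = α*_2(I), both ∂G̃/∂α_1 = 0 and ∂G̃/∂α_2 = 0 hold at (α_1,α_2) = (α*_1(I), α*_2(I)), where G̃(α_1,α_2) = α_1(1−α_1−(I−1)β_1)w_1 + α_2(1−(α_1+α_2+(I−1)(β_1+β_2)))w_2(1−α_1). -/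

import Mathlib

/-- Two-round game payoff for one of `I` symmetric players, when each of the
other `I − 1` players supplies shares `β₁, β₂` in the two rounds:
`G̃(α₁,α₂) = y₀[α₁(1−α₁−(I−1)β₁)w₁ + α₂(1−(α₁+α₂+(I−1)(β₁+β₂)))w₂(1−α₁)]`. -/
noncomputable def gamePayoff (y₀ w₁ w₂ : ℝ) (I : ℕ) (β₁ β₂ a₁ a₂ : ℝ) : ℝ :=
  y₀ * (a₁ * (1 - a₁ - ((I : ℝ) - 1) * β₁) * w₁ +
    a₂ * (1 - (a₁ + a₂ + ((I : ℝ) - 1) * (β₁ + β₂))) * w₂ * (1 - a₁))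

/-- The discriminant `81I⁴ + 126I³ + 409I² − 512I + 4`. -/
noncomputable def gameDisc (I : ℝ) : ℝ :=
  81 * I ^ 4 + 126 * I ^ 3 + 409 * I ^ 2 - 512 * I + 4

/-- The symmetric equilibrium first-round share with `I` players
(for `w₁ = 1`, `w₂ = 11/9`). -/
noncomputable def alpha1Eq (I : ℝ) : ℝ :=
  1 / I - 1 / I * ((I + 1) / (44 * I + 22)) *
    (9 * I ^ 2 + 7 * I + 20 - Real.sqrt (gameDisc I))

/-- The symmetric equilibrium second-round share with `I` players
(for `w₁ = 1`, `w₂ = 11/9`). -/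
noncomputable def alpha2Eq (I : ℝ) : ℝ :=
  1 / (44 * I + 22) * (9 * I ^ 2 + 7 * I + 20 - Real.sqrt (gameDisc I))

/- Symmetry turns the second-round condition into `I α₁ = 1 − (I + 1) α₂`; substituting this into
the first-round condition leaves the quadratic `11(2I + 1) α₂² − (9I² + 7I + 20) α₂ + 9 = 0`,
whose discriminant is `gameDisc I` and whose smaller root is `alpha2Eq I`. -/

section Derivatives

variable (y₀ w₁ w₂ : ℝ) (I : ℕ) (β₁ β₂ a₁ a₂ : ℝ)

theorem hasDerivAt_gamePayoff_fst :
    HasDerivAt (fun x => gamePayoff y₀ w₁ w₂ I β₁ β₂ x a₂)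
      (y₀ * ((1 - 2 * a₁ - ((I : ℝ) - 1) * β₁) * w₁ -
        a₂ * w₂ * (2 - 2 * a₁ - a₂ - ((I : ℝ) - 1) * (β₁ + β₂)))) a₁ := by
  have hx := hasDerivAt_id' a₁
  unfold gamePayoff
  refine HasDerivAt.congr_deriv (HasDerivAt.const_mul y₀ <|
    ((hx.mul ((hx.const_sub 1).sub_const _)).mul_const w₁).add
      ((((((hx.add_const a₂).add_const _).const_sub 1).const_mul a₂).mul_const w₂).mul
        (hx.const_sub 1))) ?_
  ring

theorem hasDerivAt_gamePayoff_snd :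
    HasDerivAt (fun x => gamePayoff y₀ w₁ w₂ I β₁ β₂ a₁ x)
      (y₀ * w₂ * (1 - a₁) * (1 - a₁ - 2 * a₂ - ((I : ℝ) - 1) * (β₁ + β₂))) a₂ := by
  have hx := hasDerivAt_id' a₂
  unfold gamePayoff
  refine HasDerivAt.congr_deriv (HasDerivAt.const_mul y₀ <| (hasDerivAt_const a₂ _).add
    (((hx.mul (((hx.const_add a₁).add_const _).const_sub 1)).mul_const w₂).mul_const _)) ?_
  ring

end Derivatives

theorem gameDisc_pos {I : ℝ} (hI : 1 ≤ I) : 0 < gameDisc I := by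
  unfold gameDisc
  nlinarith [sq_nonneg (I - 1), sq_nonneg (I ^ 2 - 1), sq_nonneg (I ^ 2 - I)]

theorem discrim_eq_gameDisc (I : ℝ) :
    discrim (11 * (2 * I + 1)) (-(9 * I ^ 2 + 7 * I + 20)) 9 = gameDisc I := by
  unfold discrim gameDisc
  ring

theorem alpha2Eq_isRoot {I : ℝ} (hI : 2 * I + 1 ≠ 0) (hD : 0 ≤ gameDisc I) :
    11 * (2 * I + 1) * (alpha2Eq I * alpha2Eq I) + -(9 * I ^ 2 + 7 * I + 20) * alpha2Eq I + 9
      = 0 := by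
  have hdiscrim : discrim (11 * (2 * I + 1)) (-(9 * I ^ 2 + 7 * I + 20)) 9 =
      √(gameDisc I) * √(gameDisc I) := by
    rw [discrim_eq_gameDisc, Real.mul_self_sqrt hD]
  refine (quadratic_eq_zero_iff (mul_ne_zero (by norm_num) hI) hdiscrim _).mpr (Or.inr ?_)
  rw [alpha2Eq, show 44 * I + 22 = 2 * (11 * (2 * I + 1)) by ring]
  ring

theorem mul_alpha1Eq {I : ℝ} (hI : I ≠ 0) : I * alpha1Eq I = 1 - (I + 1) * alpha2Eq I := by
  unfold alpha1Eq alpha2Eq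
  field_simp

theorem symmetric_foc_fst_of_isRoot {I a₁ a₂ : ℝ} (hI : I ≠ 0) (hfoc₂ : I * a₁ = 1 - (I + 1) * a₂)
    (hroot : 11 * (2 * I + 1) * (a₂ * a₂) + -(9 * I ^ 2 + 7 * I + 20) * a₂ + 9 = 0) :
    1 - 2 * a₁ - (I - 1) * a₁ - a₂ * (11 / 9) * (2 - 2 * a₁ - a₂ - (I - 1) * (a₁ + a₂)) = 0 := by
  have h : 9 * I * (1 - 2 * a₁ - (I - 1) * a₁ -
      a₂ * (11 / 9) * (2 - 2 * a₁ - a₂ - (I - 1) * (a₁ + a₂))) = 0 := by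
    linear_combination (-(9 * I + 9) + 11 * (I + 1) * a₂) * hfoc₂ - hroot
  exact (mul_eq_zero.mp h).resolve_left (by positivity)

/-- explicit symmetric equilibrium of Section 4.1.
For every `I ≥ 1` the discriminant is positive and `(α₁*(I), α₂*(I))` solves
the symmetric-equilibrium first-order system of the two-round game with
`w₁ = 1`, `w₂ = 11/9`, the rivals' shares being fixed at `β₁ = α₁*(I)`,
`β₂ = α₂*(I)`. -/
theorem game_symmetric_equilibrium (I : ℕ) (hI : 1 ≤ I) :
    0 < gameDisc (I : ℝ) ∧
      HasDerivAt
        (fun x : ℝ =>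
          gamePayoff 1 1 (11 / 9) I (alpha1Eq (I : ℝ)) (alpha2Eq (I : ℝ)) x
            (alpha2Eq (I : ℝ)))
        0 (alpha1Eq (I : ℝ)) ∧
      HasDerivAt
        (fun x : ℝ =>
          gamePayoff 1 1 (11 / 9) I (alpha1Eq (I : ℝ)) (alpha2Eq (I : ℝ))
            (alpha1Eq (I : ℝ)) x)
        0 (alpha2Eq (I : ℝ)) := by
  have hI' : (1 : ℝ) ≤ I := by exact_mod_cast hI
  have hD := gameDisc_pos hI'
  have hfoc₂ := mul_alpha1Eq (I := I) (by positivity)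
  have hroot := alpha2Eq_isRoot (I := I) (by positivity) hD.le
  refine ⟨hD, (hasDerivAt_gamePayoff_fst ..).congr_deriv ?_,
    (hasDerivAt_gamePayoff_snd ..).congr_deriv ?_⟩
  · linear_combination symmetric_foc_fst_of_isRoot (by positivity) hfoc₂ hroot
  · linear_combination (-(11 / 9) * (1 - alpha1Eq (I : ℝ))) * hfoc₂
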